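/- arXiv:2511.06823 — 4 statements merged into one kernel-verified Lean document; each statement's English description precedes it below -/
import Mathlib

section
/- Let 0 < q ≤ 2 and let x, y be real numbers with y ≠ 0. Then |x|^q ≤ (q/2)·|y|^(q−2)·x² + ((2−q)/2)·|y|^q. -/
/-!
Since `t ↦ t ^ p` is concave on `[0, ∞)` for `0 ≤ p ≤ 1`, it lies below its tangent line at any
`a > 0`. Applied with `p = q / 2` at `t = x²`, `a = y²` this is the claim, because
`(x²) ^ (r / 2) = |x| ^ r` for every real `r`.
-/

namespace Real

theorem rpow_le_tangent_of_le_one {a t p : ℝ} (ha : 0 < a) (ht : 0 ≤ t) (hp0 : 0 ≤ p)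
    (hp1 : p ≤ 1) : t ^ p ≤ p * a ^ (p - 1) * t + (1 - p) * a ^ p := by
  have bernoulli : (t / a) ^ p ≤ 1 + p * (t / a - 1) := by
    simpa using rpow_one_add_le_one_add_mul_self (s := t / a - 1)
      (by linarith [div_nonneg ht ha.le]) hp0 hp1
  have hap : 0 < a ^ p := rpow_pos_of_pos ha p
  calc t ^ p = a ^ p * (t / a) ^ p := by
        rw [div_rpow ht ha.le, mul_div_cancel₀ _ hap.ne']
    _ ≤ a ^ p * (1 + p * (t / a - 1)) := mul_le_mul_of_nonneg_left bernoulli hap.le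
    _ = p * a ^ (p - 1) * t + (1 - p) * a ^ p := by
        rw [rpow_sub_one ha.ne']
        field_simp
        ring

theorem sq_rpow_half (x r : ℝ) : (x ^ 2) ^ (r / 2) = |x| ^ r := by
  rw [← sq_abs, ← rpow_natCast_mul (abs_nonneg x)]
  congr 1
  push_cast
  ring

end Real

/-- Lemma 1: pointwise majorization inequality for `|x|^q`. -/
theorem lq_majorization (q x y : ℝ) (hq0 : 0 < q) (hq2 : q ≤ 2) (hy : y ≠ 0) :
    |x| ^ q ≤ q / 2 * |y| ^ (q - 2) * x ^ 2 + (2 - q) / 2 * |y| ^ q := by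
  have tangent := Real.rpow_le_tangent_of_le_one (by positivity : 0 < y ^ 2) (sq_nonneg x)
    (by linarith : 0 ≤ q / 2) (by linarith : q / 2 ≤ 1)
  rw [show q / 2 - 1 = (q - 2) / 2 by ring, Real.sq_rpow_half, Real.sq_rpow_half,
    Real.sq_rpow_half] at tangent
  convert tangent using 2
  ring
end

section
/- Let 0 < q ≤ 2, let A be an m × n real matrix, let y ∈ ℝ^m, let x_k ∈ ℝ^n, and let ε > 0. Define, for each index i, the weight w_i = ((A x_k − y)_i² + ε)^((q−2)/4) and the residual r(x)_i = (A x − y)_i. Then for every x ∈ ℝ^n, ∑_i |r(x)_i|^q ≤ (q/2)·∑_i (w_i · r(x)_i)² + ((2−q)/2)·∑_i ((A x_k − y)_i² + ε)^(q/2). -/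
/-! The map `u ↦ u ^ (q / 2)` is concave on `[0, ∞)` for `0 < q ≤ 2`, so it lies below its tangent
line at `s = r_k² + ε > 0`. Evaluated at `u = r²` this tangent line is exactly the surrogate
`(q/2) · s^((q-2)/2) · r² + ((2-q)/2) · s^(q/2)`, and `s^((q-2)/2) = w²`. -/

open Finset

/-- Bernoulli's inequality `(1 + h) ^ p ≤ 1 + p h`, rescaled from the point `1` to the point `s`. -/
lemma Real.rpow_le_tangent_of_le_one_s3 {p s u : ℝ} (hp0 : 0 ≤ p) (hp1 : p ≤ 1) (hs : 0 < s)
    (hu : 0 ≤ u) : u ^ p ≤ p * s ^ (p - 1) * u + (1 - p) * s ^ p := by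
  have bernoulli := rpow_one_add_le_one_add_mul_self
    (by linarith [div_nonneg hu hs.le] : -1 ≤ u / s - 1) hp0 hp1
  rw [add_sub_cancel, Real.div_rpow hu hs.le, div_le_iff₀ (Real.rpow_pos_of_pos hs p)] at bernoulli
  calc u ^ p ≤ (1 + p * (u / s - 1)) * s ^ p := bernoulli
    _ = p * (s ^ p / s) * u + (1 - p) * s ^ p := by field_simp; ring
    _ = p * s ^ (p - 1) * u + (1 - p) * s ^ p := by rw [Real.rpow_sub_one hs.ne']

lemma Real.abs_rpow_le_reweighted_sq {q s : ℝ} (hq0 : 0 < q) (hq2 : q ≤ 2) (hs : 0 < s)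
    (t : ℝ) :
    |t| ^ q ≤ q / 2 * (s ^ ((q - 2) / 4) * t) ^ 2 + (2 - q) / 2 * s ^ (q / 2) := by
  have abs_rpow : |t| ^ q = (t ^ 2) ^ (q / 2) := by
    rw [← sq_abs, ← Real.rpow_natCast, ← Real.rpow_mul (abs_nonneg t)]
    congr 1
    push_cast
    ring
  have weight_sq : (s ^ ((q - 2) / 4) * t) ^ 2 = s ^ (q / 2 - 1) * t ^ 2 := by
    rw [mul_pow, ← Real.rpow_natCast, ← Real.rpow_mul hs.le]
    congr 2
    ring
  rw [abs_rpow, weight_sq]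
  calc (t ^ 2) ^ (q / 2) ≤ q / 2 * s ^ (q / 2 - 1) * t ^ 2 + (1 - q / 2) * s ^ (q / 2) :=
        Real.rpow_le_tangent_of_le_one_s3 (by linarith) (by linarith) hs (sq_nonneg t)
    _ = q / 2 * (s ^ (q / 2 - 1) * t ^ 2) + (2 - q) / 2 * s ^ (q / 2) := by ring

theorem irls_surrogate_majorizes_general {m n : ℕ} (q ε : ℝ) (hq0 : 0 < q) (hq2 : q ≤ 2)
    (hε : 0 < ε) (A : Matrix (Fin m) (Fin n) ℝ) (y : Fin m → ℝ) (xk : Fin n → ℝ)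
    (w : Fin m → ℝ) (hw : ∀ i, w i = ((A.mulVec xk - y) i ^ 2 + ε) ^ ((q - 2) / 4))
    (r : (Fin n → ℝ) → Fin m → ℝ) :
    ∀ x : Fin n → ℝ,
      ∑ i, |r x i| ^ q ≤
        q / 2 * ∑ i, (w i * r x i) ^ 2
          + (2 - q) / 2 * ∑ i, ((A.mulVec xk - y) i ^ 2 + ε) ^ (q / 2) := by
  intro x
  calc ∑ i, |r x i| ^ q
      ≤ ∑ i, (q / 2 * (w i * r x i) ^ 2
          + (2 - q) / 2 * ((A.mulVec xk - y) i ^ 2 + ε) ^ (q / 2)) := by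
        refine sum_le_sum fun i _ => ?_
        rw [hw i]
        exact Real.abs_rpow_le_reweighted_sq hq0 hq2 (by positivity) (r x i)
    _ = q / 2 * ∑ i, (w i * r x i) ^ 2
          + (2 - q) / 2 * ∑ i, ((A.mulVec xk - y) i ^ 2 + ε) ^ (q / 2) := by
        rw [sum_add_distrib, mul_sum, mul_sum]

/-- Lemma 2: the ε-perturbed reweighted least-squares surrogate majorizes the
ℓq data-fidelity term. -/
theorem irls_surrogate_majorizes {m n : ℕ} (q ε : ℝ) (hq0 : 0 < q) (hq2 : q ≤ 2)
    (hε : 0 < ε) (A : Matrix (Fin m) (Fin n) ℝ) (y : Fin m → ℝ) (xk : Fin n → ℝ)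
    (w : Fin m → ℝ) (hw : ∀ i, w i = ((A.mulVec xk - y) i ^ 2 + ε) ^ ((q - 2) / 4))
    (r : (Fin n → ℝ) → Fin m → ℝ) (hr : ∀ x i, r x i = (A.mulVec x - y) i) :
    ∀ x : Fin n → ℝ,
      ∑ i, |r x i| ^ q ≤
        q / 2 * ∑ i, (w i * r x i) ^ 2
          + (2 - q) / 2 * ∑ i, ((A.mulVec xk - y) i ^ 2 + ε) ^ (q / 2) :=
  irls_surrogate_majorizes_general q ε hq0 hq2 hε A y xk w hw r
end

section
/- Let 0 < q ≤ 2, let A be an m × n real matrix, let y ∈ ℝ^m, and let x_k ∈ ℝ^n be such that (A x_k − y)_i ≠ 0 for every index i. Define weights w_i = |(A x_k − y)_i|^((q−2)/2). Then: (1) for every x ∈ ℝ^n, ∑_i |(A x − y)_i|^q ≤ (q/2)·∑_i (w_i · (A x − y)_i)² + ((2−q)/2)·∑_i |(A x_k − y)_i|^q; and (2) equality holds at x = x_k, i.e. ∑_i |(A x_k − y)_i|^q = (q/2)·∑_i (w_i · (A x_k − y)_i)² + ((2−q)/2)·∑_i |(A x_k − y)_i|^q. -/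
/-!
Termwise, with `b = |(A xₖ - y)ᵢ| > 0` and `t = (A x - y)ᵢ`, the inequality
`|t|^q ≤ (q/2) (b^((q-2)/2) t)² + ((2-q)/2) b^q` is the weighted AM-GM inequality for
`(b^((q-2)/2) |t|)²` and `b^q` with weights `q/2` and `(2-q)/2`, whose geometric mean is `|t|^q`.
At `t = b` both terms equal `b^q`, which gives equality.
-/

open Real

lemma sq_abs_rpow_sub_two_div_two_mul_self {t : ℝ} (ht : t ≠ 0) (q : ℝ) :
    (|t| ^ ((q - 2) / 2) * t) ^ 2 = |t| ^ q := by
  have ht' : 0 < |t| := abs_pos.mpr ht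
  rw [mul_pow, ← sq_abs t, ← rpow_two, ← rpow_two, ← rpow_mul ht'.le, ← rpow_add ht']
  ring_nf

lemma abs_rpow_le_quadratic_surrogate {q : ℝ} (hq0 : 0 ≤ q) (hq2 : q ≤ 2) (t : ℝ) {b : ℝ}
    (hb : 0 < b) :
    |t| ^ q ≤ q / 2 * (b ^ ((q - 2) / 2) * t) ^ 2 + (2 - q) / 2 * b ^ q := by
  have hbq : 0 ≤ b ^ ((q - 2) / 2) := rpow_nonneg hb.le _
  have hsq : (b ^ ((q - 2) / 2) * t) ^ 2 = (b ^ ((q - 2) / 2) * |t|) ^ (2 : ℝ) := by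
    rw [rpow_two, ← sq_abs, abs_mul, abs_of_nonneg hbq]
  have hgm :
      ((b ^ ((q - 2) / 2) * |t|) ^ (2 : ℝ)) ^ (q / 2) * (b ^ q) ^ ((2 - q) / 2) = |t| ^ q := by
    rw [← rpow_mul (by positivity), ← rpow_mul hb.le, mul_rpow hbq (abs_nonneg t),
      ← rpow_mul hb.le, mul_right_comm, ← rpow_add hb,
      show (q - 2) / 2 * (2 * (q / 2)) + q * ((2 - q) / 2) = 0 by ring,
      show (2 : ℝ) * (q / 2) = q by ring, rpow_zero, one_mul]
  rw [hsq, ← hgm]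
  exact geom_mean_le_arith_mean2_weighted (by linarith) (by linarith) (by positivity)
    (by positivity) (by ring)

section

variable {ι : Type*} [Fintype ι] {q : ℝ} (s : ι → ℝ)

theorem sum_abs_rpow_le_reweighted_sum_sq (hq0 : 0 ≤ q) (hq2 : q ≤ 2) (hs : ∀ i, s i ≠ 0)
    (r : ι → ℝ) :
    ∑ i, |r i| ^ q ≤
      q / 2 * ∑ i, (|s i| ^ ((q - 2) / 2) * r i) ^ 2 + (2 - q) / 2 * ∑ i, |s i| ^ q := by
  rw [Finset.mul_sum, Finset.mul_sum, ← Finset.sum_add_distrib]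
  exact Finset.sum_le_sum fun i _ ↦
    abs_rpow_le_quadratic_surrogate hq0 hq2 (r i) (abs_pos.mpr (hs i))

theorem sum_abs_rpow_eq_reweighted_sum_sq (hs : ∀ i, s i ≠ 0) :
    ∑ i, |s i| ^ q =
      q / 2 * ∑ i, (|s i| ^ ((q - 2) / 2) * s i) ^ 2 + (2 - q) / 2 * ∑ i, |s i| ^ q := by
  simp only [sq_abs_rpow_sub_two_div_two_mul_self (hs _)]
  ring

end

/-- Unperturbed Lemma 2: the reweighted least-squares surrogate majorizes the
ℓq term everywhere and is tangent (touches) at the current iterate `xk`. -/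
theorem irls_surrogate_majorizes_and_touches {m n : ℕ} (q : ℝ) (hq0 : 0 < q)
    (hq2 : q ≤ 2) (A : Matrix (Fin m) (Fin n) ℝ) (y : Fin m → ℝ) (xk : Fin n → ℝ)
    (hres : ∀ i, (A.mulVec xk - y) i ≠ 0) (w : Fin m → ℝ)
    (hw : ∀ i, w i = |(A.mulVec xk - y) i| ^ ((q - 2) / 2)) :
    (∀ x : Fin n → ℝ,
      ∑ i, |(A.mulVec x - y) i| ^ q ≤
        q / 2 * ∑ i, (w i * (A.mulVec x - y) i) ^ 2
          + (2 - q) / 2 * ∑ i, |(A.mulVec xk - y) i| ^ q) ∧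
    (∑ i, |(A.mulVec xk - y) i| ^ q =
        q / 2 * ∑ i, (w i * (A.mulVec xk - y) i) ^ 2
          + (2 - q) / 2 * ∑ i, |(A.mulVec xk - y) i| ^ q) := by
  obtain rfl : w = fun i ↦ |(A.mulVec xk - y) i| ^ ((q - 2) / 2) := funext hw
  exact ⟨fun x ↦ sum_abs_rpow_le_reweighted_sum_sq _ hq0.le hq2 hres (A.mulVec x - y),
    sum_abs_rpow_eq_reweighted_sum_sq _ hres⟩
end

section
/- Let φ(x; μ, v) = (1/√(2πv)) · exp(−(x − μ)²/(2v)) denote the Gaussian density with mean μ and variance v > 0. Let β ∈ (0, 1), let ᾱ ∈ (0, 1) (the previous cumulative product), and set α = (1 − β) · ᾱ. Then for all real x_0, x_prev, x_cur: φ(x_cur; √(1−β) · x_prev, β) · φ(x_prev; √(ᾱ) · x_0, 1 − ᾱ) = φ(x_cur; √(α) · x_0, 1 − α) · φ(x_prev; μ̃, σ̃²), where μ̃ = (√(1−β) · (1 − ᾱ) / (1 − α)) · x_cur + (√(ᾱ) · β / (1 − α)) · x_0 and σ̃² = ((1 − ᾱ)/(1 − α)) · β. -/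
/-- The Gaussian density with mean `μ` and variance `v`. -/
noncomputable def gaussPDF (x μ v : ℝ) : ℝ :=
  1 / Real.sqrt (2 * Real.pi * v) * Real.exp (-(x - μ) ^ 2 / (2 * v))

/-- Scalar Bayes factorization underlying the DDPM reverse process:
`p(x_i | x_{i-1}, x_0) · p(x_{i-1} | x_0) = p(x_i | x_0) · q(x_{i-1} | x_i, x_0)`,
showing the posterior is Gaussian with mean `μ̃` and variance `σ̃²`. -/
theorem ddpm_posterior_factorization (β ᾱ α : ℝ) (hβ : β ∈ Set.Ioo (0 : ℝ) 1)
    (hᾱ : ᾱ ∈ Set.Ioo (0 : ℝ) 1) (hα : α = (1 - β) * ᾱ)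
    (x0 xprev xcur : ℝ) :
    gaussPDF xcur (Real.sqrt (1 - β) * xprev) β *
        gaussPDF xprev (Real.sqrt ᾱ * x0) (1 - ᾱ) =
      gaussPDF xcur (Real.sqrt α * x0) (1 - α) *
        gaussPDF xprev
          (Real.sqrt (1 - β) * (1 - ᾱ) / (1 - α) * xcur
            + Real.sqrt ᾱ * β / (1 - α) * x0)
          ((1 - ᾱ) / (1 - α) * β) := by
  obtain ⟨hβ0, hβ1⟩ := hβ
  obtain ⟨hᾱ0, hᾱ1⟩ := hᾱ
  have h1β : (0:ℝ) < 1 - β := by linarith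
  have hαpos : 0 < α := by rw [hα]; positivity
  have hα1 : α < 1 := by nlinarith
  have h1α : (0:ℝ) < 1 - α := by linarith
  have hπ := Real.pi_pos
  set a := Real.sqrt (1 - β) with hadef
  set b := Real.sqrt ᾱ with hbdef
  have ha2 : a ^ 2 = 1 - β := Real.sq_sqrt h1β.le
  have hb2 : b ^ 2 = ᾱ := Real.sq_sqrt hᾱ0.le
  have hsα : Real.sqrt α = a * b := by
    rw [hα, Real.sqrt_mul h1β.le]
  unfold gaussPDF
  rw [hsα]
  have h1ᾱ : (0:ℝ) < 1 - ᾱ := by linarith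
  have hσ2 : (0:ℝ) < (1 - ᾱ) / (1 - α) * β := mul_pos (div_pos h1ᾱ h1α) hβ0
  have hmul : 2 * Real.pi * β * (2 * Real.pi * (1 - ᾱ))
      = 2 * Real.pi * (1 - α) * (2 * Real.pi * ((1 - ᾱ) / (1 - α) * β)) := by
    field_simp
  have hnorm : 1 / Real.sqrt (2 * Real.pi * β) * (1 / Real.sqrt (2 * Real.pi * (1 - ᾱ)))
      = 1 / Real.sqrt (2 * Real.pi * (1 - α)) *
        (1 / Real.sqrt (2 * Real.pi * ((1 - ᾱ) / (1 - α) * β))) := by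
    rw [div_mul_div_comm, div_mul_div_comm, one_mul,
      ← Real.sqrt_mul (by positivity : (0:ℝ) ≤ 2 * Real.pi * β),
      ← Real.sqrt_mul (by nlinarith : (0:ℝ) ≤ 2 * Real.pi * (1 - α)), hmul]
  have hexp : -(xcur - a * xprev) ^ 2 / (2 * β) + -(xprev - b * x0) ^ 2 / (2 * (1 - ᾱ))
      = -(xcur - a * b * x0) ^ 2 / (2 * (1 - α))
        + -(xprev - (a * (1 - ᾱ) / (1 - α) * xcur + b * β / (1 - α) * x0)) ^ 2
            / (2 * ((1 - ᾱ) / (1 - α) * β)) := by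
    have hβe : β = 1 - a ^ 2 := by linarith
    have hᾱe : ᾱ = b ^ 2 := hb2.symm
    have hαe : α = a ^ 2 * b ^ 2 := by rw [hα, ha2, hb2]
    rw [hβe, hᾱe, hαe]
    have h1 : (1:ℝ) - a ^ 2 ≠ 0 := by rw [← hβe]; exact ne_of_gt hβ0
    have h2 : (1:ℝ) - b ^ 2 ≠ 0 := by rw [← hᾱe]; exact ne_of_gt h1ᾱ
    have h3 : (1:ℝ) - a ^ 2 * b ^ 2 ≠ 0 := by
      rw [show a ^ 2 * b ^ 2 = α from hαe.symm]; exact ne_of_gt h1α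
    field_simp
    ring
  calc 1 / Real.sqrt (2 * Real.pi * β) * Real.exp (-(xcur - a * xprev) ^ 2 / (2 * β)) *
        (1 / Real.sqrt (2 * Real.pi * (1 - ᾱ)) * Real.exp (-(xprev - b * x0) ^ 2 / (2 * (1 - ᾱ))))
      = (1 / Real.sqrt (2 * Real.pi * β) * (1 / Real.sqrt (2 * Real.pi * (1 - ᾱ)))) *
          Real.exp (-(xcur - a * xprev) ^ 2 / (2 * β) + -(xprev - b * x0) ^ 2 / (2 * (1 - ᾱ))) := by
        rw [Real.exp_add]; ring
    _ = (1 / Real.sqrt (2 * Real.pi * (1 - α)) *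
          (1 / Real.sqrt (2 * Real.pi * ((1 - ᾱ) / (1 - α) * β)))) *
          Real.exp (-(xcur - a * b * x0) ^ 2 / (2 * (1 - α))
            + -(xprev - (a * (1 - ᾱ) / (1 - α) * xcur + b * β / (1 - α) * x0)) ^ 2
                / (2 * ((1 - ᾱ) / (1 - α) * β))) := by
        rw [hnorm, hexp]
    _ = _ := by rw [Real.exp_add]; ring
end
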